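/- For any finite sequence of action symbols a1, a2, ..., an (n ≥ 0) and any EPDL formula φ, the formula K⦗a1⦘⦗a2⦘···⦗an⦘φ ↔ ⟨?K⟨a1⟩⊤; a1; ...; ?K⟨an⟩⊤; an⟩Kφ is valid on uncertainty maps, where ⦗a⦘φ abbreviates [a]φ ∧ ⟨a⟩φ. -/

import Mathlib

mutual
/-- Formulas of EPDL. -/
inductive EForm (P A : Type) : Type
  | top : EForm P A
  | atom : P → EForm P A
  | neg : EForm P A → EForm P A
  | and : EForm P A → EForm P A → EForm P A
  | box : EProg P A → EForm P A → EForm P A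
  | know : EForm P A → EForm P A
/-- Programs of EPDL. -/
inductive EProg (P A : Type) : Type
  | act : A → EProg P A
  | test : EForm P A → EProg P A
  | seq : EProg P A → EProg P A → EProg P A
  | choice : EProg P A → EProg P A → EProg P A
  | star : EProg P A → EProg P A
end

namespace EForm
variable {P A : Type}
/-- φ ∨ ψ := ¬(¬φ ∧ ¬ψ) -/
def or (φ ψ : EForm P A) : EForm P A := neg (and (neg φ) (neg ψ))
/-- φ → ψ := ¬φ ∨ ψ -/
def imp (φ ψ : EForm P A) : EForm P A := or (neg φ) ψ
def iff (φ ψ : EForm P A) : EForm P A := and (imp φ ψ) (imp ψ φ)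
/-- ⟨π⟩φ := ¬[π]¬φ -/
def dia (π : EProg P A) (φ : EForm P A) : EForm P A := neg (box π (neg φ))
/-- ⦗π⦘φ := [π]φ ∧ ⟨π⟩φ -/
def bbox (π : EProg P A) (φ : EForm P A) : EForm P A := and (box π φ) (dia π φ)
/-- K̂φ := ¬K¬φ -/
def hatK (φ : EForm P A) : EForm P A := neg (know (neg φ))
end EForm

/-- A Kripke model with labelled relations. -/
structure Kripke (P A : Type) where
  S : Type
  R : A → S → S → Prop
  V : S → P → Prop

namespace Kripke
variable {P A : Type}
/-- U|^a -/
def img (N : Kripke P A) (a : A) (U : Set N.S) : Set N.S := {t | ∃ u ∈ U, N.R a u t}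
/-- Iterated update U|^σ along a sequence of actions. -/
def updU (N : Kripke P A) : Set N.S → List A → Set N.S
  | U, [] => U
  | U, a :: σ => N.updU (N.img a U) σ
end Kripke

mutual
/-- Truth of an EPDL formula at a pointed uncertainty map, represented by the
(fixed) Kripke model `N`, an uncertainty set `U` and a state `s`. -/
def eSat {P A : Type} (N : Kripke P A) : Set N.S → N.S → EForm P A → Prop
  | _, _, .top => True
  | _, s, .atom p => N.V s p
  | U, s, .neg φ => ¬ eSat N U s φ
  | U, s, .and φ ψ => eSat N U s φ ∧ eSat N U s ψ
  | U, s, .box π φ => ∀ c : Set N.S × N.S, eRel N π (U, s) c → eSat N c.1 c.2 φ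
  | U, _, .know φ => ∀ u ∈ U, eSat N U u φ
/-- The relation ⟦π⟧ between pointed uncertainty maps (over a fixed Kripke model
`N`, a pointed uncertainty map is a pair of an uncertainty set and a state). -/
def eRel {P A : Type} (N : Kripke P A) : EProg P A → Set N.S × N.S → Set N.S × N.S → Prop
  | .act a, c, c' => c'.1 = N.img a c.1 ∧ N.R a c.2 c'.2
  | .test ψ, c, c' => c' = c ∧ eSat N c.1 c.2 ψ
  | .seq π₁ π₂, c, c' => ∃ d, eRel N π₁ c d ∧ eRel N π₂ d c'
  | .choice π₁ π₂, c, c' => eRel N π₁ c c' ∨ eRel N π₂ c c'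
  | .star π, c, c' => Relation.ReflTransGen (fun x y => eRel N π x y) c c'
end

/-- Validity: truth at every pointed uncertainty map. -/
def eValid {P A : Type} (φ : EForm P A) : Prop :=
  ∀ (N : Kripke P A) (U : Set N.S), U.Nonempty → ∀ s ∈ U, eSat N U s φ

/-- ⦗a1⦘⦗a2⦘···⦗an⦘φ -/
def bchain {P A : Type} : List A → EForm P A → EForm P A
  | [], φ => φ
  | a :: as, φ => EForm.bbox (EProg.act a) (bchain as φ)

/-- The guarded action ?K⟨a⟩⊤; a. -/
def guardA {P A : Type} (a : A) : EProg P A :=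
  EProg.seq (EProg.test (EForm.know (EForm.dia (EProg.act a) EForm.top))) (EProg.act a)

/-- The program ?K⟨a1⟩⊤; a1; ...; ?K⟨an⟩⊤; an for a nonempty sequence a1...an. -/
def guardSeq {P A : Type} : A → List A → EProg P A
  | a, [] => guardA a
  | a, b :: bs => EProg.seq (guardA a) (guardSeq b bs)

/-- The formula ⟨?K⟨a1⟩⊤; a1; ...; ?K⟨an⟩⊤; an⟩Kφ (which is Kφ when n = 0). -/
def guardedDia {P A : Type} : List A → EForm P A → EForm P A
  | [], φ => EForm.know φ
  | a :: as, φ => EForm.dia (guardSeq a as) (EForm.know φ)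

/-- Σ_{a∈B}(?K⟨a⟩⊤; a), the sum of the guarded actions over a finite set B
(given as a list); for empty B it is the program ?⊥ with empty interpretation. -/
def sumGuard {P A : Type} : List A → EProg P A
  | [] => EProg.test (EForm.neg EForm.top)
  | [a] => guardA a
  | a :: b :: bs => EProg.choice (guardA a) (sumGuard (b :: bs))

/-! The update by `a` is the same for every state of the uncertainty set, so `K⦗a⦘φ` splits into
"every possible state has an `a`-successor" (the test `?K⟨a⟩⊤`) and `Kφ` on the updated map.
The right-hand side performs exactly these tests and updates along `a₁ … aₙ`, and since a
`K`-formula does not depend on the actual state, which successor it moves to does not matter. -/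

section Semantics
variable {P A : Type} {N : Kripke P A} {U : Set N.S} {s : N.S}

theorem eSat_iff {φ ψ : EForm P A} :
    eSat N U s (EForm.iff φ ψ) ↔ (eSat N U s φ ↔ eSat N U s ψ) := by
  simp only [EForm.iff, EForm.imp, EForm.or, eSat]
  tauto

theorem eSat_know {φ : EForm P A} : eSat N U s (EForm.know φ) ↔ ∀ u ∈ U, eSat N U u φ :=
  Iff.rfl

theorem eSat_bbox {π : EProg P A} {φ : EForm P A} :
    eSat N U s (EForm.bbox π φ) ↔ eSat N U s (EForm.box π φ) ∧ eSat N U s (EForm.dia π φ) :=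
  Iff.rfl

theorem eSat_dia {π : EProg P A} {χ : EForm P A} :
    eSat N U s (EForm.dia π χ) ↔ ∃ c, eRel N π (U, s) c ∧ eSat N c.1 c.2 χ := by
  simp only [EForm.dia, eSat, not_forall, not_not, exists_prop]

theorem eSat_dia_seq {π₁ π₂ : EProg P A} {χ : EForm P A} :
    eSat N U s (EForm.dia (EProg.seq π₁ π₂) χ) ↔
      eSat N U s (EForm.dia π₁ (EForm.dia π₂ χ)) := by
  simp only [eSat_dia, eRel]
  constructor
  · rintro ⟨c, ⟨d, hd, hdc⟩, hc⟩
    exact ⟨d, hd, c, hdc, hc⟩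
  · rintro ⟨d, hd, c, hdc, hc⟩
    exact ⟨c, ⟨d, hd, hdc⟩, hc⟩

theorem eSat_dia_test {ψ χ : EForm P A} :
    eSat N U s (EForm.dia (EProg.test ψ) χ) ↔ eSat N U s ψ ∧ eSat N U s χ := by
  simp only [eSat_dia, eRel]
  constructor
  · rintro ⟨_, ⟨rfl, hψ⟩, hχ⟩
    exact ⟨hψ, hχ⟩
  · rintro ⟨hψ, hχ⟩
    exact ⟨(U, s), ⟨rfl, hψ⟩, hχ⟩

theorem eSat_dia_act {a : A} {χ : EForm P A} :
    eSat N U s (EForm.dia (EProg.act a) χ) ↔ ∃ t, N.R a s t ∧ eSat N (N.img a U) t χ := by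
  simp only [eSat_dia, eRel]
  constructor
  · rintro ⟨⟨_, t⟩, ⟨rfl, ht⟩, hχ⟩
    exact ⟨t, ht, hχ⟩
  · rintro ⟨t, ht, hχ⟩
    exact ⟨(N.img a U, t), ⟨rfl, ht⟩, hχ⟩

theorem eSat_box_act {a : A} {χ : EForm P A} :
    eSat N U s (EForm.box (EProg.act a) χ) ↔ ∀ t, N.R a s t → eSat N (N.img a U) t χ := by
  simp only [eSat, eRel]
  constructor
  · intro h t ht
    exact h (N.img a U, t) ⟨rfl, ht⟩
  · rintro h ⟨_, t⟩ ⟨rfl, ht⟩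
    exact h t ht

theorem eSat_know_dia_act_top {a : A} :
    eSat N U s (EForm.know (EForm.dia (EProg.act a) EForm.top)) ↔ ∀ u ∈ U, ∃ t, N.R a u t := by
  simp only [eSat_dia_act, eSat, and_true]

theorem eSat_dia_guardA {a : A} {χ : EForm P A} :
    eSat N U s (EForm.dia (guardA a) χ) ↔
      (∀ u ∈ U, ∃ t, N.R a u t) ∧ ∃ t, N.R a s t ∧ eSat N (N.img a U) t χ := by
  rw [guardA, eSat_dia_seq, eSat_dia_test, eSat_know_dia_act_top, eSat_dia_act]

theorem eSat_guardedDia_cons {a : A} {as : List A} {φ : EForm P A} :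
    eSat N U s (guardedDia (a :: as) φ) ↔ eSat N U s (EForm.dia (guardA a) (guardedDia as φ)) := by
  cases as with
  | nil => rfl
  | cons b bs => exact eSat_dia_seq

theorem eSat_know_bbox_act {a : A} {φ : EForm P A} :
    eSat N U s (EForm.know (EForm.bbox (EProg.act a) φ)) ↔
      (∀ u ∈ U, ∃ t, N.R a u t) ∧ ∀ t ∈ N.img a U, eSat N (N.img a U) t φ := by
  simp only [eSat_know, eSat_bbox, eSat_box_act, eSat_dia_act]
  constructor
  · intro h
    refine ⟨fun u hu => ?_, ?_⟩
    · obtain ⟨t, ht, -⟩ := (h u hu).2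
      exact ⟨t, ht⟩
    · rintro t ⟨u, hu, ht⟩
      exact (h u hu).1 t ht
  · rintro ⟨hserial, hφ⟩ u hu
    refine ⟨fun t ht => hφ t ⟨u, hu, ht⟩, ?_⟩
    obtain ⟨t, ht⟩ := hserial u hu
    exact ⟨t, ht, hφ t ⟨u, hu, ht⟩⟩

theorem eSat_know_bchain_iff_guardedDia {φ : EForm P A} (as : List A) (hs : s ∈ U) :
    eSat N U s (EForm.know (bchain as φ)) ↔ eSat N U s (guardedDia as φ) := by
  induction as generalizing U s with
  | nil => rfl
  | cons a as ih =>
    rw [bchain, eSat_know_bbox_act, eSat_guardedDia_cons, eSat_dia_guardA]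
    refine and_congr_right fun hserial => ?_
    obtain ⟨t₀, ht₀⟩ := hserial s hs
    constructor
    · exact fun hφ => ⟨t₀, ht₀, (ih (U := N.img a U) ⟨s, hs, ht₀⟩).1 hφ⟩
    · rintro ⟨t, ht, hφ⟩
      exact (ih (U := N.img a U) ⟨s, hs, ht⟩).2 hφ

end Semantics

/-- For any finite sequence of action symbols a1,...,an (n ≥ 0) and
any EPDL formula φ, K⦗a1⦘⦗a2⦘···⦗an⦘φ ↔ ⟨?K⟨a1⟩⊤; a1; ...; ?K⟨an⟩⊤; an⟩Kφ is
valid on uncertainty maps (reading Kφ ↔ Kφ when n = 0). -/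
theorem know_bchain_valid {P A : Type} [Countable P] [Countable A]
    (as : List A) (φ : EForm P A) :
    eValid (EForm.iff (EForm.know (bchain as φ)) (guardedDia as φ)) :=
  fun _ _ _ _ hs => eSat_iff.2 (eSat_know_bchain_iff_guardedDia as hs)
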